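/- arXiv:0804.3551 — 9 statements merged into one kernel-verified Lean document; each statement's English description precedes it below -/
import Mathlib

section
/- If M is an interval of the real line with the induced topology, then the only total orders making M into a completely separated ordered space (toposet) are the natural order and its dual. -/
/-- If `M` is an interval of the real line with the induced topology, then the only
total orders making `M` into a completely separated ordered space (toposet) are the
natural order and its dual. -/
theorem stmt_1 (M : Set ℝ) (hM : M.OrdConnected) (le : M → M → Prop)
    (hrefl : ∀ x, le x x)
    (hantisymm : ∀ x y, le x y → le y x → x = y)
    (htrans : ∀ x y z, le x y → le y z → le x z)
    (htotal : ∀ x y, le x y ∨ le y x)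
    (htoposet : ∀ x y : M, le x y ↔
      ∀ f : M → ℝ, Continuous f → (∀ a b, le a b → f a ≤ f b) → f x ≤ f y) :
    (∀ x y : M, le x y ↔ (x : ℝ) ≤ (y : ℝ)) ∨ (∀ x y : M, le x y ↔ (y : ℝ) ≤ (x : ℝ)) := by
  classical
  by_contra hcon
  push_neg at hcon
  obtain ⟨h1, h2⟩ := hcon
  have hne_of_not_le : ∀ x y : M, ¬ le x y → le y x ∧ x ≠ y := by
    intro x y h
    refine ⟨(htotal x y).resolve_left h, ?_⟩
    rintro rfl; exact h (hrefl x)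
  obtain ⟨u, v, huv, hvu⟩ : ∃ u v : M, le u v ∧ (v : ℝ) < (u : ℝ) := by
    obtain ⟨x, y, ⟨h3, h4⟩ | ⟨h3, h4⟩⟩ := h1
    · exact ⟨x, y, h3, h4⟩
    · obtain ⟨h5, h6⟩ := hne_of_not_le x y h3
      exact ⟨y, x, h5, lt_of_le_of_ne h4 fun h => h6 (Subtype.ext h)⟩
  obtain ⟨c, d, hcd, hcd'⟩ : ∃ c d : M, le c d ∧ (c : ℝ) < (d : ℝ) := by
    obtain ⟨x, y, ⟨h3, h4⟩ | ⟨h3, h4⟩⟩ := h2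
    · exact ⟨x, y, h3, h4⟩
    · obtain ⟨h5, h6⟩ := hne_of_not_le x y h3
      exact ⟨y, x, h5, lt_of_le_of_ne h4 fun h => h6 (Subtype.ext h.symm)⟩
  -- Closedness of the graph of `le` (in both orientations)
  have key : ∀ s : M × M → M, ∀ t : M × M → M, Continuous s → Continuous t →
      IsClosed {p : M × M | le (s p) (t p)} := by
    intro s t hs ht
    have : {p : M × M | le (s p) (t p)} =
        ⋂ f ∈ {f : M → ℝ | Continuous f ∧ ∀ a b, le a b → f a ≤ f b},
          {p : M × M | f (s p) ≤ f (t p)} := by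
      ext p
      simp only [Set.mem_setOf_eq, Set.mem_iInter]
      rw [htoposet]
      exact ⟨fun h f hf => h f hf.1 hf.2, fun h f hc hm => h f ⟨hc, hm⟩⟩
    rw [this]
    exact isClosed_biInter fun f hf =>
      isClosed_le (hf.1.comp hs) (hf.1.comp ht)
  have hV : IsOpen {p : M × M | le p.1 p.2 ∧ p.1 ≠ p.2} := by
    have h := (key Prod.snd Prod.fst continuous_snd continuous_fst).isOpen_compl
    convert h using 1
    ext p
    simp only [Set.mem_setOf_eq, Set.mem_compl_iff]
    constructor
    · rintro ⟨h1, h2⟩ h3; exact h2 (hantisymm _ _ h1 h3)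
    · intro h3
      obtain ⟨h4, h5⟩ := hne_of_not_le _ _ h3
      exact ⟨h4, h5.symm⟩
  have hV' : IsOpen {p : M × M | le p.2 p.1 ∧ p.1 ≠ p.2} := by
    have h := (key Prod.fst Prod.snd continuous_fst continuous_snd).isOpen_compl
    convert h using 1
    ext p
    simp only [Set.mem_setOf_eq, Set.mem_compl_iff]
    constructor
    · rintro ⟨h1, h2⟩ h3; exact h2 (hantisymm _ _ h3 h1)
    · intro h3
      obtain ⟨h4, h5⟩ := hne_of_not_le _ _ h3
      exact ⟨h4, h5⟩
  -- The "open triangle" T is preconnected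
  set T : Set (M × M) := {p : M × M | (p.1 : ℝ) < (p.2 : ℝ)} with hT
  have hMconv : Convex ℝ M := convex_iff_ordConnected.2 hM
  have hhalf : Convex ℝ {q : ℝ × ℝ | q.1 < q.2} := by
    have : Convex ℝ {q : ℝ × ℝ | (LinearMap.fst ℝ ℝ ℝ - LinearMap.snd ℝ ℝ ℝ) q < 0} :=
      convex_halfSpace_lt (LinearMap.fst ℝ ℝ ℝ - LinearMap.snd ℝ ℝ ℝ).isLinear 0
    convert this using 1
    ext q; simp [sub_neg]
  have hSconv : Convex ℝ ((M ×ˢ M) ∩ {q : ℝ × ℝ | q.1 < q.2}) :=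
    (hMconv.prod hMconv).inter hhalf
  have hind : Topology.IsInducing (fun p : M × M => ((p.1 : ℝ), (p.2 : ℝ))) := by
    exact Topology.IsInducing.subtypeVal.prodMap Topology.IsInducing.subtypeVal
  have himg : (fun p : M × M => ((p.1 : ℝ), (p.2 : ℝ))) '' T
      = (M ×ˢ M) ∩ {q : ℝ × ℝ | q.1 < q.2} := by
    ext q
    constructor
    · rintro ⟨p, hp, rfl⟩
      exact ⟨⟨p.1.2, p.2.2⟩, hp⟩
    · rintro ⟨⟨hq1, hq2⟩, hq⟩
      exact ⟨(⟨q.1, hq1⟩, ⟨q.2, hq2⟩), hq, rfl⟩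
  have hTpre : IsPreconnected T := by
    rw [← hind.isPreconnected_image, himg]
    exact hSconv.isPreconnected
  -- Derive the contradiction
  have hsub : T ⊆ {p : M × M | le p.1 p.2 ∧ p.1 ≠ p.2} ∪ {p : M × M | le p.2 p.1 ∧ p.1 ≠ p.2} := by
    intro p hp
    have hne : p.1 ≠ p.2 := fun h => absurd (congrArg Subtype.val h) (ne_of_lt hp)
    rcases htotal p.1 p.2 with h | h
    · exact Or.inl ⟨h, hne⟩
    · exact Or.inr ⟨h, hne⟩
  have hne1 : (T ∩ {p : M × M | le p.1 p.2 ∧ p.1 ≠ p.2}).Nonempty := by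
    refine ⟨(c, d), hcd', hcd, ?_⟩
    intro h; exact absurd (congrArg Subtype.val h) (ne_of_lt hcd')
  have hne2 : (T ∩ {p : M × M | le p.2 p.1 ∧ p.1 ≠ p.2}).Nonempty := by
    refine ⟨(v, u), hvu, huv, ?_⟩
    intro h; exact absurd (congrArg Subtype.val h) (ne_of_lt hvu)
  obtain ⟨p, _, ⟨hp1, hp3⟩, ⟨hp2, -⟩⟩ := hTpre _ _ hV hV' hsub hne1 hne2
  exact hp3 (hantisymm _ _ hp1 hp2)
end

section
/- The product of two compact toposets, equipped with the product topology and the product (componentwise) order, is a toposet. -/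
/-- The product of two compact toposets, with the product topology and the
componentwise order, is again a toposet. -/
theorem stmt_5 {M₁ M₂ : Type*} [TopologicalSpace M₁] [PartialOrder M₁] [CompactSpace M₁]
    [TopologicalSpace M₂] [PartialOrder M₂] [CompactSpace M₂]
    (h₁ : ∀ x y : M₁, x ≤ y ↔ ∀ f : M₁ → ℝ, Continuous f → Monotone f → f x ≤ f y)
    (h₂ : ∀ x y : M₂, x ≤ y ↔ ∀ f : M₂ → ℝ, Continuous f → Monotone f → f x ≤ f y) :
    ∀ p q : M₁ × M₂, p ≤ q ↔ ∀ f : M₁ × M₂ → ℝ, Continuous f → Monotone f → f p ≤ f q := by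
  intro p q
  constructor
  · intro hpq f _ hf
    exact hf hpq
  · intro h
    constructor
    · rw [h₁]
      intro g hgc hgm
      exact h (fun x => g x.1) (hgc.comp continuous_fst) (fun a b hab => hgm hab.1)
    · rw [h₂]
      intro g hgc hgm
      exact h (fun x => g x.2) (hgc.comp continuous_snd) (fun a b hab => hgm hab.2)
end

section
/- Stone–Nachbin theorem: Let M be a compact toposet and J ⊆ I(M) a subset of the continuous isotone real functions such that J contains the real constants, is stable under addition, pointwise max, pointwise min, and multiplication by nonnegative scalars, and determines the order (x ≤ y ⇔ ∀ f ∈ J, f(x) ≤ f(y)). Then the uniform closure of J equals I(M), the set of all continuous isotone real-valued functions on M. -/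
/-- **Stone–Nachbin theorem.** Let `M` be a compact toposet and `J` a set of continuous
isotone real-valued functions on `M` which contains the constants, is stable under
addition, pointwise max, pointwise min and multiplication by nonnegative scalars, and
determines the order.  Then the uniform closure of `J` is the set of all continuous
isotone real-valued functions on `M`. -/
theorem stmt_6 {M : Type*} [TopologicalSpace M] [CompactSpace M] [PartialOrder M]
    (htoposet : ∀ x y : M, x ≤ y ↔ ∀ f : C(M, ℝ), Monotone f → f x ≤ f y)
    (J : Set C(M, ℝ))
    (hJI : ∀ f ∈ J, Monotone f)
    (hconst : ∀ r : ℝ, (ContinuousMap.const M r) ∈ J)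
    (hadd : ∀ f ∈ J, ∀ g ∈ J, f + g ∈ J)
    (hsup : ∀ f ∈ J, ∀ g ∈ J, f ⊔ g ∈ J)
    (hinf : ∀ f ∈ J, ∀ g ∈ J, f ⊓ g ∈ J)
    (hsmul : ∀ (r : ℝ), 0 ≤ r → ∀ f ∈ J, r • f ∈ J)
    (horder : ∀ x y : M, x ≤ y ↔ ∀ f ∈ J, f x ≤ f y) :
    closure J = {f : C(M, ℝ) | Monotone f} := by
  apply Set.Subset.antisymm
  · -- closure J ⊆ monotone functions
    refine closure_minimal (fun f hf => hJI f hf) ?_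
    have heq : {f : C(M, ℝ) | Monotone f} =
        ⋂ (p : M × M) (_ : p.1 ≤ p.2), {f : C(M, ℝ) | f p.1 ≤ f p.2} := by
      ext f
      simp only [Set.mem_setOf_eq, Set.mem_iInter]
      exact ⟨fun h p hp => h hp, fun h a b hab => h (a, b) hab⟩
    rw [heq]
    refine isClosed_iInter fun p => isClosed_iInter fun _ => ?_
    exact isClosed_le (continuous_eval_const p.1)
      (continuous_eval_const p.2)
  · -- monotone functions ⊆ closure J
    intro f hf
    simp only [Set.mem_setOf_eq] at hf
    rw [Metric.mem_closure_iff]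
    intro ε hε
    rcases isEmpty_or_nonempty M with hM | hM
    · refine ⟨ContinuousMap.const M 0, hconst 0, ?_⟩
      rw [ContinuousMap.dist_lt_iff hε]
      intro x
      exact (hM.false x).elim
    -- key interpolation lemma
    have key : ∀ x y : M, ∃ g ∈ J, g x = f x ∧ g y ≤ f y := by
      intro x y
      by_cases hfy : f x ≤ f y
      · exact ⟨ContinuousMap.const M (f x), hconst _, rfl, hfy⟩
      · have hxy : ¬ x ≤ y := fun h => hfy (hf h)
        have hex : ∃ h ∈ J, h y < h x := by
          by_contra hc
          push_neg at hc
          exact hxy ((horder x y).2 fun g hg => hc g hg)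
        obtain ⟨h0, hh0, hlt⟩ := hex
        clear hxy
        have hd : (0 : ℝ) < h0 x - h0 y := sub_pos.2 hlt
        set a : ℝ := (f x - f y) / (h0 x - h0 y) with ha
        have ha0 : 0 ≤ a := div_nonneg (sub_nonneg.2 (not_le.1 hfy).le) hd.le
        have hkey : a * (h0 x - h0 y) = f x - f y := by
          rw [ha]; field_simp
        have hkey' : a * h0 x - a * h0 y = f x - f y := by
          rw [← mul_sub]; exact hkey
        refine ⟨a • h0 + ContinuousMap.const M (f x - a * h0 x),
          hadd _ (hsmul a ha0 h0 hh0) _ (hconst _), ?_, ?_⟩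
        · simp only [ContinuousMap.add_apply, ContinuousMap.smul_apply,
            ContinuousMap.const_apply, smul_eq_mul]
          ring
        · simp only [ContinuousMap.add_apply, ContinuousMap.smul_apply,
            ContinuousMap.const_apply, smul_eq_mul]
          linarith
    -- stage 1 : for each x, a function in J equal to f at x and < f + ε everywhere
    have stage1 : ∀ x : M, ∃ h ∈ J, h x = f x ∧ ∀ z, h z < f z + ε := by
      intro x
      choose g hgJ hgx hgy using key x
      set U : M → Set M := fun y => {z | g y z < f z + ε} with hU
      have hUopen : ∀ y, IsOpen (U y) := fun y =>
        isOpen_lt (g y).continuous (by fun_prop)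
      have hcover : Set.univ ⊆ ⋃ y, U y := fun z _ =>
        Set.mem_iUnion.2 ⟨z, by
          simp only [hU, Set.mem_setOf_eq]
          exact lt_of_le_of_lt (hgy z) (by linarith)⟩
      obtain ⟨t, ht⟩ := isCompact_univ.elim_finite_subcover U hUopen hcover
      have htne : t.Nonempty := by
        obtain ⟨y, hy, _⟩ := Set.mem_iUnion₂.1 (ht (Set.mem_univ (Classical.arbitrary M)))
        exact ⟨y, hy⟩
      refine ⟨t.inf' htne g,
        Finset.inf'_mem J (fun a ha b hb => hinf a ha b hb) t htne g (fun y _ => hgJ y),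
        ?_, ?_⟩
      · rw [ContinuousMap.inf'_apply]
        rw [Finset.inf'_congr htne (g := fun _ => f x) rfl (fun y _ => hgx y)]
        exact Finset.inf'_const htne (f x)
      · intro z
        obtain ⟨y, hyt, hyz⟩ := Set.mem_iUnion₂.1 (ht (Set.mem_univ z))
        rw [ContinuousMap.inf'_apply]
        exact lt_of_le_of_lt (Finset.inf'_le _ hyt) hyz
    -- stage 2 : combine with sup
    choose h hhJ hhx hhlt using stage1
    set V : M → Set M := fun x => {z | f z - ε < h x z} with hV
    have hVopen : ∀ x, IsOpen (V x) := fun x =>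
      isOpen_lt (by fun_prop) (h x).continuous
    have hcover : Set.univ ⊆ ⋃ x, V x := fun z _ =>
      Set.mem_iUnion.2 ⟨z, by
        simp only [hV, Set.mem_setOf_eq, hhx z]
        linarith⟩
    obtain ⟨s, hs⟩ := isCompact_univ.elim_finite_subcover V hVopen hcover
    have hsne : s.Nonempty := by
      obtain ⟨x, hx, _⟩ := Set.mem_iUnion₂.1 (hs (Set.mem_univ (Classical.arbitrary M)))
      exact ⟨x, hx⟩
    refine ⟨s.sup' hsne h,
      Finset.sup'_mem J (fun a ha b hb => hsup a ha b hb) s hsne h (fun x _ => hhJ x), ?_⟩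
    rw [ContinuousMap.dist_lt_iff hε]
    intro z
    have h1 : f z - ε < (s.sup' hsne h) z := by
      obtain ⟨x, hxs, hxz⟩ := Set.mem_iUnion₂.1 (hs (Set.mem_univ z))
      rw [ContinuousMap.sup'_apply]
      exact lt_of_lt_of_le hxz (Finset.le_sup' (fun i => (h i) z) hxs)
    have h2 : (s.sup' hsne h) z < f z + ε := by
      rw [ContinuousMap.sup'_apply]
      exact Finset.sup'_lt_iff hsne |>.2 fun x _ => hhlt x z
    rw [Real.dist_eq, abs_lt]
    constructor <;> linarith
end

section
/- Let M be a compact topological space and J ⊆ C(M, ℝ). Then the relation ≤_J defined by x ≤_J y ⇔ ∀ f ∈ J, f(x) ≤ f(y) makes (M, ≤_J) a toposet with I(M, ≤_J) = J if and only if J is stable under addition, pointwise max and min, multiplication by nonnegative scalars, contains the constants, separates the points of M, and is closed in the uniform norm. -/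
open scoped Topology

/-- One-function version of the lattice Stone–Weierstrass argument: if `L` is a
sublattice of `C(X, ℝ)` on a compact space and `f` can be matched on every pair of
points by an element of `L`, then `f` lies in the closure of `L`. -/
lemma mem_closure_of_two_point {X : Type*} [TopologicalSpace X] [CompactSpace X]
    (L : Set C(X, ℝ)) (nA : L.Nonempty)
    (inf_mem : ∀ f ∈ L, ∀ g ∈ L, f ⊓ g ∈ L)
    (sup_mem : ∀ f ∈ L, ∀ g ∈ L, f ⊔ g ∈ L)
    (f : C(X, ℝ)) (sep : ∀ x y : X, ∃ g ∈ L, g x = f x ∧ g y = f y) :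
    f ∈ closure L := by
  refine
    Filter.Frequently.mem_closure
      ((Filter.HasBasis.frequently_iff Metric.nhds_basis_ball).mpr fun ε pos => ?_)
  simp only [exists_prop, Metric.mem_ball]
  by_cases nX : Nonempty X
  swap
  · exact ⟨nA.some, (ContinuousMap.dist_lt_iff pos).mpr fun x => False.elim (nX ⟨x⟩), nA.choose_spec⟩
  choose g hg w₁ w₂ using sep
  let U : X → X → Set X := fun x y => {z | f z - ε < g x y z}
  have U_nhd_y : ∀ x y, U x y ∈ 𝓝 y := by
    intro x y
    refine IsOpen.mem_nhds ?_ ?_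
    · apply isOpen_lt <;> continuity
    · rw [Set.mem_setOf_eq, w₂]
      exact sub_lt_self _ pos
  let ys : X → Finset X := fun x => (CompactSpace.elim_nhds_subcover (U x) (U_nhd_y x)).choose
  let ys_w : ∀ x, ⋃ y ∈ ys x, U x y = ⊤ := fun x =>
    (CompactSpace.elim_nhds_subcover (U x) (U_nhd_y x)).choose_spec
  have ys_nonempty : ∀ x, (ys x).Nonempty := fun x =>
    Set.nonempty_of_union_eq_top_of_nonempty _ _ nX (ys_w x)
  let h : X → L := fun x =>
    ⟨(ys x).sup' (ys_nonempty x) fun y => (g x y : C(X, ℝ)),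
      Finset.sup'_mem _ (fun a ha b hb => sup_mem a ha b hb) _ _ _ fun y _ => hg x y⟩
  have lt_h : ∀ x z, f z - ε < (h x : X → ℝ) z := by
    intro x z
    obtain ⟨y, ym, zm⟩ := Set.exists_set_mem_of_union_eq_top _ _ (ys_w x) z
    dsimp [h]
    simp only [ContinuousMap.coe_sup', Finset.sup'_apply, Finset.lt_sup'_iff]
    exact ⟨y, ym, zm⟩
  have h_eq : ∀ x, (h x : X → ℝ) x = f x := by intro x; simp [h, w₁]
  let W : X → Set X := fun x => {z | (h x : X → ℝ) z < f z + ε}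
  have W_nhd : ∀ x, W x ∈ 𝓝 x := by
    intro x
    refine IsOpen.mem_nhds ?_ ?_
    · apply isOpen_lt <;> fun_prop
    · dsimp only [W, Set.mem_setOf_eq]
      rw [Set.mem_setOf_eq, h_eq]
      exact lt_add_of_pos_right _ pos
  let xs : Finset X := (CompactSpace.elim_nhds_subcover W W_nhd).choose
  let xs_w : ⋃ x ∈ xs, W x = ⊤ := (CompactSpace.elim_nhds_subcover W W_nhd).choose_spec
  have xs_nonempty : xs.Nonempty := Set.nonempty_of_union_eq_top_of_nonempty _ _ nX xs_w
  let k : (L : Type _) :=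
    ⟨xs.inf' xs_nonempty fun x => (h x : C(X, ℝ)),
      Finset.inf'_mem _ (fun a ha b hb => inf_mem a ha b hb) _ _ _ fun x _ => (h x).2⟩
  refine ⟨k.1, ?_, k.2⟩
  rw [ContinuousMap.dist_lt_iff pos]
  intro z
  rw [show ∀ a b ε : ℝ, dist a b < ε ↔ a < b + ε ∧ b - ε < a by
        intros; simp only [← Metric.mem_ball, Real.ball_eq_Ioo, Set.mem_Ioo, and_comm]]
  constructor
  · dsimp [k]
    simp only [ContinuousMap.coe_inf', Finset.inf'_apply, Finset.inf'_lt_iff]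
    exact Set.exists_set_mem_of_union_eq_top _ _ xs_w z
  · dsimp [k]
    simp only [ContinuousMap.coe_inf', Finset.inf'_apply, Finset.lt_inf'_iff]
    intro x _
    exact lt_h x z

/-- Let `M` be a compact topological space and `J ⊆ C(M, ℝ)`.  The relation
`x ≤_J y ⇔ ∀ f ∈ J, f x ≤ f y` makes `M` a toposet whose continuous isotone functions
are exactly `J` if and only if `J` is stable under addition, pointwise max and min,
multiplication by nonnegative scalars, contains the constants, separates the points,
and is closed in the uniform norm. -/
theorem stmt_7 {M : Type*} [TopologicalSpace M] [CompactSpace M] (J : Set C(M, ℝ)) :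
    ((∀ x y : M, (∀ f ∈ J, f x ≤ f y) → (∀ f ∈ J, f y ≤ f x) → x = y) ∧
     (∀ x y : M, (∀ f ∈ J, f x ≤ f y) ↔
        ∀ g : C(M, ℝ), (∀ a b : M, (∀ f ∈ J, f a ≤ f b) → g a ≤ g b) → g x ≤ g y) ∧
     ({g : C(M, ℝ) | ∀ a b : M, (∀ f ∈ J, f a ≤ f b) → g a ≤ g b} = J))
    ↔
    ((∀ f ∈ J, ∀ g ∈ J, f + g ∈ J) ∧
     (∀ f ∈ J, ∀ g ∈ J, f ⊔ g ∈ J) ∧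
     (∀ f ∈ J, ∀ g ∈ J, f ⊓ g ∈ J) ∧
     (∀ (r : ℝ), 0 ≤ r → ∀ f ∈ J, r • f ∈ J) ∧
     (∀ r : ℝ, (ContinuousMap.const M r) ∈ J) ∧
     (∀ x y : M, x ≠ y → ∃ f ∈ J, f x ≠ f y) ∧
     IsClosed J) := by
  constructor
  · rintro ⟨h1, _h2, h3⟩
    refine ⟨?_, ?_, ?_, ?_, ?_, ?_, ?_⟩
    · intro f hf g hg
      rw [← h3]
      intro a b hab
      exact add_le_add (by rw [← h3] at hf; exact hf a b hab)
        (by rw [← h3] at hg; exact hg a b hab)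
    · intro f hf g hg
      rw [← h3]
      intro a b hab
      simp only [ContinuousMap.sup_apply]
      exact sup_le_sup (by rw [← h3] at hf; exact hf a b hab)
        (by rw [← h3] at hg; exact hg a b hab)
    · intro f hf g hg
      rw [← h3]
      intro a b hab
      simp only [ContinuousMap.inf_apply]
      exact inf_le_inf (by rw [← h3] at hf; exact hf a b hab)
        (by rw [← h3] at hg; exact hg a b hab)
    · intro r hr f hf
      rw [← h3]
      intro a b hab
      simp only [ContinuousMap.smul_apply, smul_eq_mul]
      exact mul_le_mul_of_nonneg_left (by rw [← h3] at hf; exact hf a b hab) hr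
    · intro r
      rw [← h3]
      intro a b _
      simp
    · intro x y hxy
      by_contra hc
      push_neg at hc
      exact hxy (h1 x y (fun f hf => (hc f hf).le) (fun f hf => (hc f hf).ge))
    · rw [← h3]
      have : {g : C(M, ℝ) | ∀ a b : M, (∀ f ∈ J, f a ≤ f b) → g a ≤ g b} =
          ⋂ (a : M) (b : M) (_ : ∀ f ∈ J, f a ≤ f b), {g : C(M, ℝ) | g a ≤ g b} := by
        ext g; simp [Set.mem_iInter]
      rw [this]
      exact isClosed_iInter fun a => isClosed_iInter fun b => isClosed_iInter fun _ =>
        isClosed_le (continuous_eval_const a) (continuous_eval_const b)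
  · rintro ⟨hadd, hsup, hinf, hsmul, hconst, hsep, hclosed⟩
    have h3 : {g : C(M, ℝ) | ∀ a b : M, (∀ f ∈ J, f a ≤ f b) → g a ≤ g b} = J := by
      apply Set.Subset.antisymm
      · intro g hg
        rw [← hclosed.closure_eq]
        apply mem_closure_of_two_point J ⟨_, hconst 0⟩ hinf hsup
        intro x y
        rcases eq_or_ne (g x) (g y) with heq | hne
        · exact ⟨ContinuousMap.const M (g x), hconst _, rfl, heq⟩
        · -- find f ∈ J with f x ≠ f y and (f y - f x) the same sign as (g y - g x)
          obtain ⟨f, hf, hfxy⟩ : ∃ f ∈ J, (g y - g x) * (f y - f x) > 0 := by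
            rcases lt_or_gt_of_ne hne with hlt | hlt
            · -- g x < g y : then ¬ (∀ f ∈ J, f y ≤ f x)
              have : ¬ (∀ f ∈ J, f y ≤ f x) := fun h => absurd (hg y x h) (not_le.mpr hlt)
              push_neg at this
              obtain ⟨f, hf, hfyx⟩ := this
              exact ⟨f, hf, mul_pos (sub_pos.mpr hlt) (sub_pos.mpr hfyx)⟩
            · have : ¬ (∀ f ∈ J, f x ≤ f y) := fun h => absurd (hg x y h) (not_le.mpr hlt)
              push_neg at this
              obtain ⟨f, hf, hfxy⟩ := this
              exact ⟨f, hf, mul_pos_of_neg_of_neg (sub_neg.mpr hlt) (sub_neg.mpr hfxy)⟩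
          have hfne : f y - f x ≠ 0 := by
            intro h
            rw [h, mul_zero] at hfxy
            exact lt_irrefl 0 hfxy
          set a : ℝ := (g y - g x) / (f y - f x) with ha_def
          have ha : 0 ≤ a := by
            rcases mul_pos_iff.mp hfxy with ⟨h1, h2⟩ | ⟨h1, h2⟩
            · exact (div_pos h1 h2).le
            · exact (div_pos_of_neg_of_neg h1 h2).le
          refine ⟨a • f + ContinuousMap.const M (g x - a * f x),
            hadd _ (hsmul a ha f hf) _ (hconst _), ?_, ?_⟩
          · simp [smul_eq_mul]
          · simp only [ContinuousMap.add_apply, ContinuousMap.smul_apply,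
              ContinuousMap.const_apply, smul_eq_mul]
            have : a * f y + (g x - a * f x) = a * (f y - f x) + g x := by ring
            rw [this, ha_def, div_mul_cancel₀ _ hfne]
            ring
      · intro f hf a b hab
        exact hab f hf
    refine ⟨?_, ?_, h3⟩
    · intro x y hxy hyx
      by_contra hne
      obtain ⟨f, hf, hfne⟩ := hsep x y hne
      exact hfne (le_antisymm (hxy f hf) (hyx f hf))
    · intro x y
      constructor
      · intro hxy g hg
        exact hg x y hxy
      · intro h f hf
        exact h f (fun a b hab => hab f hf)
end

section
/- Let (I, C) be an I*-algebra and define on the state space S(C) the relation s₁ ≤_I s₂ ⇔ ∀ c ∈ I, s₁(c) ≤ s₂(c). Then ≤_I is a partial order on S(C): in particular, if s₁ ≤_I s₂ and s₂ ≤_I s₁ then s₁ = s₂. -/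
noncomputable section

def cstarVee {A : Type*} [CStarAlgebra A] [PartialOrder A] [StarOrderedRing A] (a b : A) : A :=
  (2 : ℝ)⁻¹ • (a + b + CFC.sqrt (star (a - b) * (a - b)))

def cstarWedge {A : Type*} [CStarAlgebra A] [PartialOrder A] [StarOrderedRing A] (a b : A) : A :=
  (2 : ℝ)⁻¹ • (a + b - CFC.sqrt (star (a - b) * (a - b)))

structure IsIsocone (A : Type*) [CStarAlgebra A] [PartialOrder A] [StarOrderedRing A]
    (I : Set A) : Prop where
  selfAdjoint : ∀ a ∈ I, IsSelfAdjoint a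
  closed : IsClosed I
  add_mem : ∀ a ∈ I, ∀ b ∈ I, a + b ∈ I
  smul_mem : ∀ (r : ℝ), 0 ≤ r → ∀ a ∈ I, r • a ∈ I
  vee_mem : ∀ a ∈ I, ∀ b ∈ I, cstarVee a b ∈ I
  wedge_mem : ∀ a ∈ I, ∀ b ∈ I, cstarWedge a b ∈ I
  const_mem : ∀ r : ℝ, r • (1 : A) ∈ I
  dense_span : Dense (Submodule.span ℂ I : Set A)

/-- A state on a unital C*-algebra: a continuous linear functional which is unital
and positive. -/
structure IsState (A : Type*) [CStarAlgebra A] [PartialOrder A] [StarOrderedRing A]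
    (φ : A →L[ℂ] ℂ) : Prop where
  unital : φ 1 = 1
  pos : ∀ a : A, 0 ≤ a → 0 ≤ (φ a).re ∧ (φ a).im = 0

lemma state_im_zero {A : Type*} [CStarAlgebra A] [PartialOrder A] [StarOrderedRing A]
    (φ : A →L[ℂ] ℂ) (hφ : IsState A φ) {a : A} (ha : IsSelfAdjoint a) : (φ a).im = 0 := by
  have h := CFC.posPart_sub_negPart a ha
  have h1 := (hφ.pos a⁺ (CFC.posPart_nonneg a)).2
  have h2 := (hφ.pos a⁻ (CFC.negPart_nonneg a)).2
  calc (φ a).im = (φ (a⁺ - a⁻)).im := by rw [h]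
    _ = 0 := by rw [map_sub, Complex.sub_im, h1, h2, sub_zero]

/-- The relation `s₁ ≤_I s₂ ⇔ ∀ c ∈ I, s₁(c) ≤ s₂(c)` is a partial order on the state
space: in particular it is antisymmetric. -/
theorem stmt_10 {A : Type*} [CStarAlgebra A] [PartialOrder A] [StarOrderedRing A]
    {I : Set A} (hI : IsIsocone A I) (φ ψ : A →L[ℂ] ℂ)
    (hφ : IsState A φ) (hψ : IsState A ψ)
    (h₁ : ∀ c ∈ I, (φ c).re ≤ (ψ c).re) (h₂ : ∀ c ∈ I, (ψ c).re ≤ (φ c).re) :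
    φ = ψ := by
  have hIeq : ∀ c ∈ I, φ c = ψ c := by
    intro c hc
    have hsa := hI.selfAdjoint c hc
    exact Complex.ext (le_antisymm (h₁ c hc) (h₂ c hc))
      ((state_im_zero φ hφ hsa).trans (state_im_zero ψ hψ hsa).symm)
  have hspan : Set.EqOn φ ψ (Submodule.span ℂ I : Set A) := by
    intro x hx
    induction hx using Submodule.span_induction with
    | mem x hx => exact hIeq x hx
    | zero => simp
    | add x y _ _ hx hy => simp [hx, hy]
    | smul r x _ hx => simp [hx]
  have := Continuous.ext_on hI.dense_span φ.continuous ψ.continuous hspan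
  ext x
  exact congrFun this x
end
end

section
/- Let M be a compact toposet. Then M is totally ordered if and only if the I*-algebra (I(M), C(M)) is minimal, i.e. no proper subset of I(M) is itself an isocone of C(M). -/
/-- An isocone of `C(M)` (for `M` compact), described via its real part: a closed
convex cone of continuous real functions containing the constants, stable under
pointwise max and min, whose (real) span is dense (equivalently, whose complex span
is dense in `C(M, ℂ)`). -/
structure IsFnIsocone {M : Type*} [TopologicalSpace M] [CompactSpace M]
    (J : Set C(M, ℝ)) : Prop where
  closed : IsClosed J
  add_mem : ∀ f ∈ J, ∀ g ∈ J, f + g ∈ J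
  smul_mem : ∀ (r : ℝ), 0 ≤ r → ∀ f ∈ J, r • f ∈ J
  sup_mem : ∀ f ∈ J, ∀ g ∈ J, f ⊔ g ∈ J
  inf_mem : ∀ f ∈ J, ∀ g ∈ J, f ⊓ g ∈ J
  const_mem : ∀ r : ℝ, (ContinuousMap.const M r) ∈ J
  dense_span : Dense (Submodule.span ℝ J : Set C(M, ℝ))

open ContinuousMap

set_option linter.unusedSectionVars false

open ContinuousMap

section Kakutani

variable {X : Type*} [TopologicalSpace X] [CompactSpace X]

/-- One-function version of the lattice Stone–Weierstrass argument. -/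
lemma mem_closure_of_twoPoint (L : Set C(X, ℝ)) (nA : L.Nonempty)
    (inf_mem : ∀ f ∈ L, ∀ g ∈ L, f ⊓ g ∈ L)
    (sup_mem : ∀ f ∈ L, ∀ g ∈ L, f ⊔ g ∈ L)
    (f : C(X, ℝ)) (sep : ∀ x y : X, ∃ g ∈ L, g x = f x ∧ g y = f y) :
    f ∈ closure L := by
  refine
    Filter.Frequently.mem_closure
      ((Filter.HasBasis.frequently_iff Metric.nhds_basis_ball).mpr fun ε pos => ?_)
  simp only [exists_prop, Metric.mem_ball]
  by_cases nX : Nonempty X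
  swap
  · exact ⟨nA.some, (dist_lt_iff pos).mpr fun x => False.elim (nX ⟨x⟩), nA.choose_spec⟩
  choose g hg w₁ w₂ using sep
  let U : X → X → Set X := fun x y => {z | f z - ε < g x y z}
  have U_nhd_y : ∀ x y, U x y ∈ nhds y := by
    intro x y
    refine IsOpen.mem_nhds ?_ ?_
    · apply isOpen_lt <;> continuity
    · rw [Set.mem_setOf_eq, w₂]
      exact sub_lt_self _ pos
  let ys : X → Finset X := fun x => (CompactSpace.elim_nhds_subcover (U x) (U_nhd_y x)).choose
  let ys_w : ∀ x, ⋃ y ∈ ys x, U x y = ⊤ := fun x =>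
    (CompactSpace.elim_nhds_subcover (U x) (U_nhd_y x)).choose_spec
  have ys_nonempty : ∀ x, (ys x).Nonempty := fun x =>
    Set.nonempty_of_union_eq_top_of_nonempty _ _ nX (ys_w x)
  let h : X → L := fun x =>
    ⟨(ys x).sup' (ys_nonempty x) fun y => (g x y : C(X, ℝ)),
      Finset.sup'_mem _ (fun a ha b hb => sup_mem a ha b hb) _ _ _ fun y _ => hg x y⟩
  have lt_h : ∀ x z, f z - ε < (h x : X → ℝ) z := by
    intro x z
    obtain ⟨y, ym, zm⟩ := Set.exists_set_mem_of_union_eq_top _ _ (ys_w x) z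
    dsimp [h]
    simp only [coe_sup', Finset.sup'_apply, Finset.lt_sup'_iff]
    exact ⟨y, ym, zm⟩
  have h_eq : ∀ x, (h x : X → ℝ) x = f x := by intro x; simp [h, w₁]
  let W : X → Set X := fun x => {z | (h x : X → ℝ) z < f z + ε}
  have W_nhd : ∀ x, W x ∈ nhds x := by
    intro x
    refine IsOpen.mem_nhds ?_ ?_
    · apply isOpen_lt <;> fun_prop
    · dsimp only [W, Set.mem_setOf_eq]
      rw [Set.mem_setOf_eq, h_eq]
      exact lt_add_of_pos_right _ pos
  let xs : Finset X := (CompactSpace.elim_nhds_subcover W W_nhd).choose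
  let xs_w : ⋃ x ∈ xs, W x = ⊤ := (CompactSpace.elim_nhds_subcover W W_nhd).choose_spec
  have xs_nonempty : xs.Nonempty := Set.nonempty_of_union_eq_top_of_nonempty _ _ nX xs_w
  let k : (L : Type _) :=
    ⟨xs.inf' xs_nonempty fun x => (h x : C(X, ℝ)),
      Finset.inf'_mem _ (fun a ha b hb => inf_mem a ha b hb) _ _ _ fun x _ => (h x).2⟩
  refine ⟨k.1, ?_, k.2⟩
  rw [dist_lt_iff pos]
  intro z
  rw [show ∀ a b ε : ℝ, dist a b < ε ↔ a < b + ε ∧ b - ε < a by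
        intros; simp only [← Metric.mem_ball, Real.ball_eq_Ioo, Set.mem_Ioo, and_comm]]
  fconstructor
  · dsimp [k]
    simp only [Finset.inf'_lt_iff, ContinuousMap.inf'_apply]
    exact Set.exists_set_mem_of_union_eq_top _ _ xs_w z
  · dsimp [k]
    simp only [Finset.lt_inf'_iff, ContinuousMap.inf'_apply]
    rintro x -
    apply lt_h

end Kakutani



section Helpers

variable {M : Type*} [TopologicalSpace M] [CompactSpace M] [PartialOrder M]

lemma isClosed_monotoneSet : IsClosed {f : C(M, ℝ) | Monotone f} := by
  have : {f : C(M, ℝ) | Monotone f}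
      = ⋂ (x : M) (y : M) (_ : x ≤ y), {f : C(M, ℝ) | f x ≤ f y} := by
    ext f
    simp only [Set.mem_setOf_eq, Set.mem_iInter]
    exact ⟨fun h x y hxy => h hxy, fun h x y hxy => h x y hxy⟩
  rw [this]
  exact isClosed_iInter fun x => isClosed_iInter fun y => isClosed_iInter fun _ =>
    isClosed_le (continuous_eval_const x) (continuous_eval_const y)

lemma smul_monotone {f : C(M, ℝ)} (hf : Monotone f) {r : ℝ} (hr : 0 ≤ r) :
    Monotone (r • f) := fun x y hxy => by
  simp only [ContinuousMap.smul_apply, smul_eq_mul]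
  exact mul_le_mul_of_nonneg_left (hf hxy) hr

lemma mem_span_mono {f : C(M, ℝ)}
    (hf : f ∈ Submodule.span ℝ {g : C(M, ℝ) | Monotone g}) :
    ∃ a b : C(M, ℝ), Monotone a ∧ Monotone b ∧ f = a - b := by
  induction hf using Submodule.span_induction with
  | mem g hg => exact ⟨g, 0, hg, monotone_const, (sub_zero g).symm⟩
  | zero => exact ⟨0, 0, monotone_const, monotone_const, (sub_zero 0).symm⟩
  | add g h _ _ ihg ihh =>
    obtain ⟨a₁, b₁, ha₁, hb₁, rfl⟩ := ihg
    obtain ⟨a₂, b₂, ha₂, hb₂, rfl⟩ := ihh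
    refine ⟨a₁ + a₂, b₁ + b₂, ?_, ?_, by abel⟩
    · intro x y hxy
      simp only [ContinuousMap.add_apply]
      exact add_le_add (ha₁ hxy) (ha₂ hxy)
    · intro x y hxy
      simp only [ContinuousMap.add_apply]
      exact add_le_add (hb₁ hxy) (hb₂ hxy)
  | smul r g _ ihg =>
    obtain ⟨a, b, ha, hb, rfl⟩ := ihg
    rcases le_total 0 r with hr | hr
    · exact ⟨r • a, r • b, smul_monotone ha hr, smul_monotone hb hr, by module⟩
    · refine ⟨(-r) • b, (-r) • a, smul_monotone hb (by linarith), smul_monotone ha (by linarith),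
        by module⟩

lemma sub_mem_span_mono {a b : C(M, ℝ)} (ha : Monotone a) (hb : Monotone b) :
    a - b ∈ Submodule.span ℝ {g : C(M, ℝ) | Monotone g} :=
  Submodule.sub_mem _ (Submodule.subset_span ha) (Submodule.subset_span hb)

lemma sup_decomp (a₁ b₁ a₂ b₂ : C(M, ℝ)) :
    (a₁ - b₁) ⊔ (a₂ - b₂) = ((a₁ + b₂) ⊔ (a₂ + b₁)) - (b₁ + b₂) := by
  ext x
  simp only [ContinuousMap.sup_apply, ContinuousMap.sub_apply, ContinuousMap.add_apply]
  rcases le_total (a₁ x - b₁ x) (a₂ x - b₂ x) with h | h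
  · rw [max_eq_right h, max_eq_right (by linarith)]; ring
  · rw [max_eq_left h, max_eq_left (by linarith)]; ring

lemma inf_decomp (a₁ b₁ a₂ b₂ : C(M, ℝ)) :
    (a₁ - b₁) ⊓ (a₂ - b₂) = ((a₁ + b₂) ⊓ (a₂ + b₁)) - (b₁ + b₂) := by
  ext x
  simp only [ContinuousMap.inf_apply, ContinuousMap.sub_apply, ContinuousMap.add_apply]
  rcases le_total (a₁ x - b₁ x) (a₂ x - b₂ x) with h | h
  · rw [min_eq_left h, min_eq_left (by linarith)]; ring
  · rw [min_eq_right h, min_eq_right (by linarith)]; ring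

/-- If continuous monotone functions separate points, the span of monotone functions is
dense. -/
lemma dense_span_monotone
    (hsep : ∀ x y : M, x ≠ y → ∃ u : C(M, ℝ), Monotone u ∧ u x ≠ u y) :
    Dense (Submodule.span ℝ {f : C(M, ℝ) | Monotone f} : Set C(M, ℝ)) := by
  have hmono_add : ∀ (a b : C(M, ℝ)), Monotone a → Monotone b → Monotone (a + b) := by
    intro a b ha hb x y hxy
    simp only [ContinuousMap.add_apply]
    exact add_le_add (ha hxy) (hb hxy)
  have hmono_sup : ∀ (a b : C(M, ℝ)), Monotone a → Monotone b → Monotone (a ⊔ b) := by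
    intro a b ha hb x y hxy
    show (a ⊔ b) x ≤ (a ⊔ b) y
    rw [ContinuousMap.sup_apply, ContinuousMap.sup_apply]
    exact max_le_max (ha hxy) (hb hxy)
  have hmono_inf : ∀ (a b : C(M, ℝ)), Monotone a → Monotone b → Monotone (a ⊓ b) := by
    intro a b ha hb x y hxy
    show (a ⊓ b) x ≤ (a ⊓ b) y
    rw [ContinuousMap.inf_apply, ContinuousMap.inf_apply]
    exact min_le_min (ha hxy) (hb hxy)
  have const_mono : ∀ r : ℝ, Monotone (ContinuousMap.const M r) :=
    fun r => monotone_const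
  rw [dense_iff_closure_eq]
  refine ContinuousMap.sublattice_closure_eq_top _ ⟨0, Submodule.zero_mem _⟩ ?_ ?_ ?_
  · intro f hf g hg
    obtain ⟨a₁, b₁, ha₁, hb₁, rfl⟩ := mem_span_mono hf
    obtain ⟨a₂, b₂, ha₂, hb₂, rfl⟩ := mem_span_mono hg
    rw [inf_decomp]
    exact sub_mem_span_mono (hmono_inf _ _ (hmono_add _ _ ha₁ hb₂) (hmono_add _ _ ha₂ hb₁))
      (hmono_add _ _ hb₁ hb₂)
  · intro f hf g hg
    obtain ⟨a₁, b₁, ha₁, hb₁, rfl⟩ := mem_span_mono hf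
    obtain ⟨a₂, b₂, ha₂, hb₂, rfl⟩ := mem_span_mono hg
    rw [sup_decomp]
    exact sub_mem_span_mono (hmono_sup _ _ (hmono_add _ _ ha₁ hb₂) (hmono_add _ _ ha₂ hb₁))
      (hmono_add _ _ hb₁ hb₂)
  · intro v x y
    by_cases hxy : x = y
    · subst hxy
      exact ⟨ContinuousMap.const M (v x), Submodule.subset_span (const_mono _), rfl, rfl⟩
    obtain ⟨u, hu, huxy⟩ := hsep x y hxy
    set α : ℝ := (v x - v y) / (u x - u y) with hα
    refine ⟨α • u + ContinuousMap.const M (v x - α * u x),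
      Submodule.add_mem _ (Submodule.smul_mem _ _ (Submodule.subset_span hu))
        (Submodule.subset_span (const_mono _)), ?_, ?_⟩
    · simp [ContinuousMap.add_apply]
    · simp only [ContinuousMap.add_apply, ContinuousMap.smul_apply, smul_eq_mul,
        ContinuousMap.const_apply]
      have hne : u x - u y ≠ 0 := sub_ne_zero_of_ne huxy
      rw [hα]
      field_simp
      ring

end Helpers

/-- Let `M` be a compact toposet.  Then `M` is totally ordered if and only if the
`I*`-algebra `(I(M), C(M))` is minimal, i.e. the only isocone contained in the cone
`I(M)` of continuous isotone functions is `I(M)` itself. -/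
theorem stmt_13 {M : Type*} [TopologicalSpace M] [CompactSpace M] [PartialOrder M]
    (htoposet : ∀ x y : M, x ≤ y ↔ ∀ f : C(M, ℝ), Monotone f → f x ≤ f y) :
    (∀ x y : M, x ≤ y ∨ y ≤ x) ↔
      (∀ J : Set C(M, ℝ), IsFnIsocone J → J ⊆ {f : C(M, ℝ) | Monotone f} →
        J = {f : C(M, ℝ) | Monotone f}) := by
  have hmono_add : ∀ (a b : C(M, ℝ)), Monotone a → Monotone b → Monotone (a + b) := by
    intro a b ha hb x y hxy
    show (a + b) x ≤ (a + b) y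
    rw [ContinuousMap.add_apply, ContinuousMap.add_apply]
    exact add_le_add (ha hxy) (hb hxy)
  have hsep : ∀ p q : M, p ≠ q → ∃ u : C(M, ℝ), Monotone u ∧ u p ≠ u q := by
    intro p q hpq
    have hor : ¬ p ≤ q ∨ ¬ q ≤ p := by
      by_contra hc; push_neg at hc; exact hpq (le_antisymm hc.1 hc.2)
    rcases hor with h | h
    · rw [htoposet] at h; push_neg at h
      obtain ⟨u, hu, hlt⟩ := h
      exact ⟨u, hu, hlt.ne'⟩
    · rw [htoposet] at h; push_neg at h
      obtain ⟨u, hu, hlt⟩ := h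
      exact ⟨u, hu, hlt.ne⟩
  constructor
  · -- total order → minimality
    intro htot J hJ hJsub
    refine Set.Subset.antisymm hJsub ?_
    intro f hf
    rw [← hJ.closed.closure_eq]
    refine mem_closure_of_twoPoint J ⟨ContinuousMap.const M 0, hJ.const_mem 0⟩
      hJ.inf_mem hJ.sup_mem f ?_
    have key : ∀ x y : M, x ≤ y → ∃ g ∈ J, g x = f x ∧ g y = f y := by
      intro x y hxy
      by_cases hxy' : x = y
      · subst hxy'
        exact ⟨ContinuousMap.const M (f x), hJ.const_mem _, rfl, rfl⟩
      have hufind : ∃ u ∈ J, u x ≠ u y := by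
        by_contra hC
        push_neg at hC
        have hK : (Submodule.span ℝ J : Set C(M, ℝ)) ⊆ {g : C(M, ℝ) | g x = g y} := by
          intro g hg
          induction hg using Submodule.span_induction with
          | mem u hu => exact hC u hu
          | zero => simp
          | add u v _ _ ihu ihv =>
            show (u + v) x = (u + v) y
            rw [ContinuousMap.add_apply, ContinuousMap.add_apply, ihu, ihv]
          | smul r u _ ihu =>
            show (r • u) x = (r • u) y
            rw [ContinuousMap.smul_apply, ContinuousMap.smul_apply, ihu]
        have hclosed : IsClosed {g : C(M, ℝ) | g x = g y} :=
          isClosed_eq (continuous_eval_const x) (continuous_eval_const y)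
        have hall : ∀ g : C(M, ℝ), g x = g y := by
          intro g
          have hg : g ∈ closure (Submodule.span ℝ J : Set C(M, ℝ)) := by
            rw [hJ.dense_span.closure_eq]; trivial
          exact hclosed.closure_subset_iff.mpr hK hg
        obtain ⟨u, hu, hune⟩ := hsep x y hxy'
        exact hune (hall u)
      obtain ⟨u, huJ, hune⟩ := hufind
      have humono : Monotone u := hJsub huJ
      have hult : u x < u y := lt_of_le_of_ne (humono hxy) hune
      set α : ℝ := (f y - f x) / (u y - u x) with hα
      have hα0 : 0 ≤ α := div_nonneg (sub_nonneg.2 (hf hxy)) (sub_nonneg.2 hult.le)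
      have hne : u y - u x ≠ 0 := sub_ne_zero_of_ne hune.symm
      refine ⟨α • u + ContinuousMap.const M (f x - α * u x),
        hJ.add_mem _ (hJ.smul_mem α hα0 u huJ) _ (hJ.const_mem _), ?_, ?_⟩
      · show α • u x + (f x - α * u x) = f x
        simp only [smul_eq_mul]; ring
      · show α • u y + (f x - α * u x) = f y
        simp only [smul_eq_mul]
        rw [hα]
        field_simp
        ring
    intro x y
    rcases htot x y with h | h
    · exact key x y h
    · obtain ⟨g, hg, h1, h2⟩ := key y x h
      exact ⟨g, hg, h2, h1⟩
  · -- minimality → total order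
    intro hmin x y
    by_contra hC
    push_neg at hC
    obtain ⟨h1, h2⟩ := hC
    set J₀ : Set C(M, ℝ) := {f | Monotone f ∧ f x ≤ f y} with hJ₀
    have hiso : IsFnIsocone J₀ := by
      constructor
      · have : J₀ = {f : C(M, ℝ) | Monotone f} ∩ {f : C(M, ℝ) | f x ≤ f y} := rfl
        rw [this]
        exact isClosed_monotoneSet.inter
          (isClosed_le (continuous_eval_const x) (continuous_eval_const y))
      · rintro f ⟨hfm, hfxy⟩ g ⟨hgm, hgxy⟩
        refine ⟨hmono_add f g hfm hgm, ?_⟩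
        show f x + g x ≤ f y + g y
        exact add_le_add hfxy hgxy
      · rintro r hr f ⟨hfm, hfxy⟩
        refine ⟨smul_monotone hfm hr, ?_⟩
        show r • f x ≤ r • f y
        simp only [smul_eq_mul]
        exact mul_le_mul_of_nonneg_left hfxy hr
      · rintro f ⟨hfm, hfxy⟩ g ⟨hgm, hgxy⟩
        constructor
        · intro a b hab
          show (f ⊔ g) a ≤ (f ⊔ g) b
          rw [ContinuousMap.sup_apply, ContinuousMap.sup_apply]
          exact max_le_max (hfm hab) (hgm hab)
        · show (f ⊔ g) x ≤ (f ⊔ g) y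
          rw [ContinuousMap.sup_apply, ContinuousMap.sup_apply]
          exact max_le_max hfxy hgxy
      · rintro f ⟨hfm, hfxy⟩ g ⟨hgm, hgxy⟩
        constructor
        · intro a b hab
          show (f ⊓ g) a ≤ (f ⊓ g) b
          rw [ContinuousMap.inf_apply, ContinuousMap.inf_apply]
          exact min_le_min (hfm hab) (hgm hab)
        · show (f ⊓ g) x ≤ (f ⊓ g) y
          rw [ContinuousMap.inf_apply, ContinuousMap.inf_apply]
          exact min_le_min hfxy hgxy
      · intro r
        exact ⟨monotone_const, le_refl r⟩
      · -- dense span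
        have hsub : {f : C(M, ℝ) | Monotone f} ⊆ (Submodule.span ℝ J₀ : Set C(M, ℝ)) := by
          intro f hfm
          have h2' := h2
          rw [htoposet] at h2'; push_neg at h2'
          obtain ⟨g, hgm, hglt⟩ := h2'
          have hgxy : g x < g y := hglt
          set t : ℝ := max 0 ((f x - f y) / (g y - g x)) with ht
          have ht0 : 0 ≤ t := le_max_left _ _
          have htg : f x - f y ≤ t * (g y - g x) := by
            have hpos : 0 < g y - g x := sub_pos.2 hgxy
            have := le_max_right 0 ((f x - f y) / (g y - g x))
            calc f x - f y = (f x - f y) / (g y - g x) * (g y - g x) := by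
                  field_simp
              _ ≤ t * (g y - g x) := by
                  exact mul_le_mul_of_nonneg_right this hpos.le
          have h1mem : f + t • g ∈ J₀ := by
            refine ⟨hmono_add f (t • g) hfm (smul_monotone hgm ht0), ?_⟩
            show f x + t • g x ≤ f y + t • g y
            simp only [smul_eq_mul]
            have hring : t * g y - t * g x = t * (g y - g x) := by ring
            linarith only [htg, hring]
          have h2mem : t • g ∈ J₀ := by
            refine ⟨smul_monotone hgm ht0, ?_⟩
            show t • g x ≤ t • g y
            simp only [smul_eq_mul]
            exact mul_le_mul_of_nonneg_left hgxy.le ht0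
          have : f = (f + t • g) - t • g := by abel
          rw [this]
          exact Submodule.sub_mem _ (Submodule.subset_span h1mem)
            (Submodule.subset_span h2mem)
        have hle : Submodule.span ℝ {f : C(M, ℝ) | Monotone f} ≤ Submodule.span ℝ J₀ :=
          Submodule.span_le.2 hsub
        exact Dense.mono hle (dense_span_monotone hsep)
    have heq := hmin J₀ hiso (fun f hf => hf.1)
    have h1' := h1
    rw [htoposet] at h1'; push_neg at h1'
    obtain ⟨h0, hm, hlt⟩ := h1'
    have : h0 ∈ J₀ := heq.symm ▸ hm
    exact absurd this.2 (not_le.2 hlt)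
end

section
/- Let (I, C) be an I*-algebra and c, c' ∈ I₊ = I ∩ C₊ with [c, c'] = 0. Then cc' ∈ I₊. -/
set_option linter.unusedSectionVars false
set_option linter.unreachableTactic false
set_option linter.unusedTactic false
set_option maxHeartbeats 1000000

noncomputable section

namespace Stmt15Aux



noncomputable def cfcAbs {B : Type*} [CStarAlgebra B] (x : B) : B := cfc (fun t : ℝ => |t|) x

noncomputable def veeC {B : Type*} [CStarAlgebra B] (x y : B) : B :=
  (2 : ℝ)⁻¹ • (x + y + cfcAbs (x - y))

noncomputable def wedgeC {B : Type*} [CStarAlgebra B] (x y : B) : B :=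
  (2 : ℝ)⁻¹ • (x + y - cfcAbs (x - y))

lemma isSelfAdjoint_cfcAbs {B : Type*} [CStarAlgebra B] (x : B) : IsSelfAdjoint (cfcAbs x) :=
  cfc_predicate _ x

lemma isSelfAdjoint_veeC {B : Type*} [CStarAlgebra B] {x y : B}
    (hx : IsSelfAdjoint x) (hy : IsSelfAdjoint y) : IsSelfAdjoint (veeC x y) := by
  have := isSelfAdjoint_cfcAbs (x - y)
  exact IsSelfAdjoint.smul (star_trivial ((2:ℝ)⁻¹)) ((hx.add hy).add this)

lemma isSelfAdjoint_wedgeC {B : Type*} [CStarAlgebra B] {x y : B}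
    (hx : IsSelfAdjoint x) (hy : IsSelfAdjoint y) : IsSelfAdjoint (wedgeC x y) := by
  have := isSelfAdjoint_cfcAbs (x - y)
  exact IsSelfAdjoint.smul (star_trivial ((2:ℝ)⁻¹)) ((hx.add hy).sub this)

/-- In an ordered C⋆-algebra, `CFC.sqrt (star a * a) = cfcAbs a` for selfadjoint `a`. -/
lemma sqrt_star_mul_self {A : Type*} [CStarAlgebra A] [PartialOrder A] [StarOrderedRing A]
    {a : A} (ha : IsSelfAdjoint a) : CFC.sqrt (star a * a) = cfcAbs a := by
  rw [ha.star_eq]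
  rw [CFC.sqrt_eq_iff (hb := cfc_nonneg (fun x _ => abs_nonneg x))
    (ha := by have := star_mul_self_nonneg a; rwa [ha.star_eq] at this)]
  rw [cfcAbs, ← cfc_mul _ _ a]
  calc cfc (fun t : ℝ => |t| * |t|) a = cfc (fun t : ℝ => t * t) a := by
        exact cfc_congr fun t _ => abs_mul_abs_self t
    _ = a * a := by
        rw [cfc_mul _ _ a, cfc_id' ℝ a]

variable {A : Type*} [CStarAlgebra A] [PartialOrder A] [StarOrderedRing A]

lemma cstarVee_eq_veeC {a b : A} (ha : IsSelfAdjoint a) (hb : IsSelfAdjoint b) :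
    cstarVee a b = veeC a b := by
  rw [cstarVee, veeC, sqrt_star_mul_self (ha.sub hb)]

lemma cstarWedge_eq_wedgeC {a b : A} (ha : IsSelfAdjoint a) (hb : IsSelfAdjoint b) :
    cstarWedge a b = wedgeC a b := by
  rw [cstarWedge, wedgeC, sqrt_star_mul_self (ha.sub hb)]

section Hom

variable {F B C : Type*} [CStarAlgebra B] [CStarAlgebra C] [FunLike F B C]
  [AlgHomClass F ℂ B C] [StarHomClass F B C]

lemma map_real_smul (φ : F) (r : ℝ) (z : B) : φ (r • z) = r • φ z := by
  rw [← algebraMap_smul ℂ r z, ← algebraMap_smul ℂ r (φ z), map_smul]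

lemma map_cfcAbs (φ : F) (hφ : Continuous φ) {x : B} (hx : IsSelfAdjoint x) :
    φ (cfcAbs x) = cfcAbs (φ x) :=
  StarAlgHomClass.map_cfc φ _ x (by fun_prop) hφ hx (hx.map φ)

lemma map_veeC (φ : F) (hφ : Continuous φ) {x y : B}
    (hx : IsSelfAdjoint x) (hy : IsSelfAdjoint y) :
    φ (veeC x y) = veeC (φ x) (φ y) := by
  rw [veeC, veeC, map_real_smul φ, map_add, map_add, map_cfcAbs φ hφ (hx.sub hy), map_sub]

lemma map_wedgeC (φ : F) (hφ : Continuous φ) {x y : B}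
    (hx : IsSelfAdjoint x) (hy : IsSelfAdjoint y) :
    φ (wedgeC x y) = wedgeC (φ x) (φ y) := by
  rw [wedgeC, wedgeC, map_real_smul φ, map_sub, map_add, map_cfcAbs φ hφ (hx.sub hy), map_sub]

end Hom

section ComplexEval

lemma real_min_eq (a b : ℝ) : 2⁻¹ * (a + b - |a - b|) = min a b := by
  rcases le_total a b with h | h
  · rw [abs_of_nonpos (by linarith), min_eq_left h]; ring
  · rw [abs_of_nonneg (by linarith), min_eq_right h]; ring

lemma real_max_eq (a b : ℝ) : 2⁻¹ * (a + b + |a - b|) = max a b := by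
  rcases le_total a b with h | h
  · rw [abs_of_nonpos (by linarith), max_eq_right h]; ring
  · rw [abs_of_nonneg (by linarith), max_eq_left h]; ring

lemma cfcAbs_ofReal (r : ℝ) : cfcAbs ((r : ℝ) : ℂ) = ((|r| : ℝ) : ℂ) := by
  have h : ((r : ℝ) : ℂ) = algebraMap ℝ ℂ r := rfl
  rw [cfcAbs, h, cfc_algebraMap (R := ℝ) (A := ℂ) r (fun t : ℝ => |t|)]
  rfl

lemma veeC_ofReal (a b : ℝ) : veeC ((a : ℝ) : ℂ) ((b : ℝ) : ℂ) = ((max a b : ℝ) : ℂ) := by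
  rw [veeC]
  have : ((a : ℝ) : ℂ) - b = ((a - b : ℝ) : ℂ) := by push_cast; ring
  rw [this, cfcAbs_ofReal, Complex.real_smul]
  rw [← real_max_eq]
  push_cast
  ring

end ComplexEval


lemma wedgeC_ofReal (a b : ℝ) : wedgeC ((a : ℝ) : ℂ) ((b : ℝ) : ℂ) = ((min a b : ℝ) : ℂ) := by
  rw [wedgeC]
  have : ((a : ℝ) : ℂ) - b = ((a - b : ℝ) : ℂ) := by push_cast; ring
  rw [this, cfcAbs_ofReal, Complex.real_smul]
  rw [← real_min_eq]
  push_cast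
  ring

lemma real_key (Aa Bb : ℝ) (hA0 : 0 ≤ Aa) (hA1 : Aa ≤ 1) (hB0 : 0 ≤ Bb) (hB1 : Bb ≤ 1)
    (n : ℕ) (hn : 1 ≤ n) :
    |(∑ k ∈ Finset.range n,
        (n : ℝ)⁻¹ * min Aa ((n : ℝ) ^ 2 * (max Bb ((k : ℝ) / n) - (k : ℝ) / n))) - Aa * Bb|
      ≤ (n : ℝ)⁻¹ := by
  have hn0 : (0 : ℝ) < n := by exact_mod_cast hn
  have h1n' : (1:ℝ) ≤ n := by exact_mod_cast hn
  have hninv : (0:ℝ) < (n:ℝ)⁻¹ := by positivity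
  have hlow : Aa * Bb ≤ ∑ k ∈ Finset.range n,
      (n : ℝ)⁻¹ * min Aa ((n : ℝ) ^ 2 * (max Bb ((k : ℝ) / n) - (k : ℝ) / n)) := by
    have htel : ∑ k ∈ Finset.range n,
        (min Bb (((k:ℝ)+1) / n) - min Bb ((k:ℝ) / n)) = Bb := by
      have h := Finset.sum_range_sub (f := fun k => min Bb ((k:ℝ)/n)) n
      push_cast at h
      rw [h, div_self (ne_of_gt hn0), zero_div, min_eq_left hB1, min_eq_right hB0]
      ring
    calc Aa * Bb = ∑ k ∈ Finset.range n,
          Aa * (min Bb (((k:ℝ)+1) / n) - min Bb ((k:ℝ) / n)) := by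
          rw [← Finset.mul_sum, htel]
      _ ≤ _ := by
          refine Finset.sum_le_sum fun k hk => ?_
          have h1n : ((k:ℝ)+1)/n = (k:ℝ)/n + (n:ℝ)⁻¹ := by field_simp
          rw [h1n]
          set t : ℝ := (k:ℝ)/n with ht
          clear_value t
          rcases le_total Bb t with hBt | hBt
          · rw [min_eq_left (hBt.trans (by linarith)), min_eq_left hBt, sub_self, mul_zero]
            have : (0:ℝ) ≤ max Bb t - t := by simp [le_max_right]
            positivity
          · rw [max_eq_left hBt]
            have hm1 : min Bb (t + (n:ℝ)⁻¹) ≤ t + (n:ℝ)⁻¹ := min_le_right _ _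
            have hm2 : min Bb (t + (n:ℝ)⁻¹) ≤ Bb := min_le_left _ _
            have hm3 : t ≤ min Bb (t + (n:ℝ)⁻¹) := le_min hBt (by linarith)
            rw [min_eq_right hBt]
            rcases le_total Aa ((n:ℝ)^2 * (Bb - t)) with h2 | h2
            · rw [min_eq_left h2]
              nlinarith
            · rw [min_eq_right h2]
              have e : (n:ℝ)⁻¹ * ((n:ℝ)^2*(Bb - t)) = (n:ℝ)*(Bb - t) := by
                field_simp
              rw [e]
              nlinarith [mul_nonneg (sub_nonneg.mpr hA1) (sub_nonneg.mpr hm3),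
                mul_nonneg (sub_nonneg.mpr h1n') (sub_nonneg.mpr hBt)]
  have hup : (∑ k ∈ Finset.range n,
      (n : ℝ)⁻¹ * min Aa ((n : ℝ) ^ 2 * (max Bb ((k : ℝ) / n) - (k : ℝ) / n)))
      ≤ Aa * Bb + (n:ℝ)⁻¹ := by
    have htel : ∑ k ∈ Finset.range n,
        Aa * (min (Bb + (n:ℝ)⁻¹) (((k:ℝ)+1) / n) - min (Bb + (n:ℝ)⁻¹) ((k:ℝ) / n))
        = Aa * min (Bb + (n:ℝ)⁻¹) 1 := by
      rw [← Finset.mul_sum]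
      have h := Finset.sum_range_sub (f := fun k => min (Bb + (n:ℝ)⁻¹) ((k:ℝ)/n)) n
      push_cast at h
      rw [h, div_self (ne_of_gt hn0), zero_div,
        min_eq_right (by positivity : (0:ℝ) ≤ Bb + (n:ℝ)⁻¹)]
      ring
    calc (∑ k ∈ Finset.range n,
          (n : ℝ)⁻¹ * min Aa ((n : ℝ) ^ 2 * (max Bb ((k : ℝ) / n) - (k : ℝ) / n)))
        ≤ ∑ k ∈ Finset.range n,
          Aa * (min (Bb + (n:ℝ)⁻¹) (((k:ℝ)+1) / n) - min (Bb + (n:ℝ)⁻¹) ((k:ℝ) / n)) := by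
          refine Finset.sum_le_sum fun k hk => ?_
          have h1n : ((k:ℝ)+1)/n = (k:ℝ)/n + (n:ℝ)⁻¹ := by field_simp
          rw [h1n]
          set t : ℝ := (k:ℝ)/n with ht
          clear_value t
          rcases le_total Bb t with hBt | hBt
          · rw [max_eq_right hBt, sub_self, mul_zero, min_eq_right hA0, mul_zero]
            have : min (Bb + (n:ℝ)⁻¹) t ≤ min (Bb + (n:ℝ)⁻¹) (t + (n:ℝ)⁻¹) :=
              min_le_min le_rfl (by linarith)
            nlinarith
          · have ht1 : t + (n:ℝ)⁻¹ ≤ Bb + (n:ℝ)⁻¹ := by linarith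
            rw [min_eq_right ht1, min_eq_right (by linarith : t ≤ Bb + (n:ℝ)⁻¹)]
            have hmin : min Aa ((n : ℝ) ^ 2 * (max Bb t - t)) ≤ Aa := min_le_left _ _
            have hminn : 0 ≤ min Aa ((n : ℝ) ^ 2 * (max Bb t - t)) := by
              refine le_min hA0 ?_
              have : (0:ℝ) ≤ max Bb t - t := by simp [le_max_right]
              positivity
            nlinarith
      _ = Aa * min (Bb + (n:ℝ)⁻¹) 1 := htel
      _ ≤ Aa * Bb + (n:ℝ)⁻¹ := by
          have h1 : min (Bb + (n:ℝ)⁻¹) 1 ≤ Bb + (n:ℝ)⁻¹ := min_le_left _ _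
          have h2 : 0 ≤ min (Bb + (n:ℝ)⁻¹) 1 := le_min (by positivity) zero_le_one
          nlinarith
  rw [abs_le]
  constructor <;> linarith

open WeakDual in
lemma char_norm_le {B : Type*} [CommCStarAlgebra B] (z : B) (M : ℝ) (hM : 0 ≤ M)
    (h : ∀ φ : characterSpace ℂ B, ‖φ z‖ ≤ M) : ‖z‖ ≤ M := by
  have hiso := gelfandTransform_isometry B
  have h0 : gelfandTransform ℂ B 0 = 0 := map_zero _
  have : ‖gelfandTransform ℂ B z‖ = ‖z‖ := by
    simpa using hiso.norm_map_of_map_zero h0 z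
  rw [← this]
  rw [ContinuousMap.norm_le _ hM]
  intro φ
  simpa using h φ

open WeakDual in
lemma char_apply_eq_re {B : Type*} [CommCStarAlgebra B] (φ : characterSpace ℂ B) {x : B}
    (hx : IsSelfAdjoint x) : φ x = (((φ x).re : ℝ) : ℂ) := by
  have h : IsSelfAdjoint (φ x) := hx.map φ
  rw [IsSelfAdjoint, Complex.star_def, Complex.conj_eq_iff_re] at h
  exact h.symm

open WeakDual in
lemma char_re_props {B : Type*} [CommCStarAlgebra B] [Nontrivial B]
    (φ : characterSpace ℂ B) {x : B} (hx : IsSelfAdjoint x)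
    (hx0 : spectrum ℝ x ⊆ Set.Ici 0) (hx1 : ‖x‖ ≤ 1) :
    0 ≤ (φ x).re ∧ (φ x).re ≤ 1 := by
  have hmem : φ x ∈ spectrum ℂ x := CharacterSpace.apply_mem_spectrum φ x
  constructor
  · have : (((φ x).re : ℝ) : ℂ) ∈ spectrum ℂ x := by rwa [← char_apply_eq_re φ hx]
    have hre : (φ x).re ∈ spectrum ℝ x := by
      rw [← Complex.coe_algebraMap] at this
      exact (spectrum.algebraMap_mem_iff ℂ).mp this
    exact hx0 hre
  · have hnorm : ‖φ x‖ ≤ ‖x‖ := spectrum.norm_le_norm_of_mem hmem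
    calc (φ x).re ≤ |(φ x).re| := le_abs_self _
      _ ≤ ‖φ x‖ := Complex.abs_re_le_norm _
      _ ≤ 1 := hnorm.trans hx1


open WeakDual in
lemma key_estimate {B : Type*} [CommCStarAlgebra B] [Nontrivial B] {x y : B}
    (hx : IsSelfAdjoint x) (hy : IsSelfAdjoint y)
    (hx0 : spectrum ℝ x ⊆ Set.Ici 0) (hy0 : spectrum ℝ y ⊆ Set.Ici 0)
    (hx1 : ‖x‖ ≤ 1) (hy1 : ‖y‖ ≤ 1) (n : ℕ) (hn : 1 ≤ n) :
    ‖(∑ k ∈ Finset.range n, (n:ℝ)⁻¹ •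
        wedgeC x ((n:ℝ)^2 • (veeC y (((k:ℝ)/n) • 1) - ((k:ℝ)/n) • 1))) - x * y‖
      ≤ (n:ℝ)⁻¹ := by
  have hninv : (0:ℝ) ≤ (n:ℝ)⁻¹ := by positivity
  refine char_norm_le _ _ hninv fun φ => ?_
  have hφc : Continuous φ := map_continuous φ
  set rx := (φ x).re with hrx
  set ry := (φ y).re with hry
  have hφx : φ x = ((rx : ℝ) : ℂ) := char_apply_eq_re φ hx
  have hφy : φ y = ((ry : ℝ) : ℂ) := char_apply_eq_re φ hy
  obtain ⟨hrx0, hrx1⟩ := char_re_props φ hx hx0 hx1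
  obtain ⟨hry0, hry1⟩ := char_re_props φ hy hy0 hy1
  have hterm : ∀ k : ℕ, φ ((n:ℝ)⁻¹ •
        wedgeC x ((n:ℝ)^2 • (veeC y (((k:ℝ)/n) • 1) - ((k:ℝ)/n) • 1)))
      = ((((n:ℝ)⁻¹ * min rx ((n:ℝ)^2 * (max ry ((k:ℝ)/n) - (k:ℝ)/n))) : ℝ) : ℂ) := by
    intro k
    set t : ℝ := (k:ℝ)/n with ht
    have h1 : IsSelfAdjoint (t • (1:B)) :=
      IsSelfAdjoint.smul (star_trivial t) (IsSelfAdjoint.one B)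
    have hvee : IsSelfAdjoint (veeC y (t • (1:B))) := isSelfAdjoint_veeC hy h1
    have hw : IsSelfAdjoint ((n:ℝ)^2 • (veeC y (t • (1:B)) - t • (1:B))) :=
      IsSelfAdjoint.smul (star_trivial _) (hvee.sub h1)
    rw [map_real_smul φ, map_wedgeC φ hφc hx hw, map_real_smul φ, map_sub,
      map_veeC φ hφc hy h1, map_real_smul φ, map_one, hφx, hφy]
    have h2 : t • (1:ℂ) = ((t:ℝ):ℂ) := by rw [Complex.real_smul, mul_one]
    rw [h2, veeC_ofReal]
    have h3 : ((max ry t : ℝ) : ℂ) - ((t:ℝ):ℂ) = (((max ry t - t) : ℝ) : ℂ) := by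
      push_cast; ring
    rw [h3]
    have h4 : ((n:ℝ)^2) • (((max ry t - t : ℝ)) : ℂ)
        = ((((n:ℝ)^2 * (max ry t - t)) : ℝ) : ℂ) := by
      rw [Complex.real_smul]; push_cast; ring
    rw [h4, wedgeC_ofReal, Complex.real_smul]
    push_cast
    ring
  rw [map_sub, map_sum, map_mul, hφx, hφy]
  rw [Finset.sum_congr rfl fun k _ => hterm k]
  rw [← Complex.ofReal_sum, ← Complex.ofReal_mul, ← Complex.ofReal_sub, Complex.norm_real]
  exact real_key rx ry hrx0 hrx1 hry0 hry1 n hn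

open WeakDual in
lemma key {A : Type*} [CStarAlgebra A] [PartialOrder A] [StarOrderedRing A]
    {I : Set A} (hI : IsIsocone A I) {c c' : A}
    (hc : c ∈ I) (hc0 : 0 ≤ c) (hc' : c' ∈ I) (hc'0 : 0 ≤ c')
    (hcomm : c * c' = c' * c) (hc1 : ‖c‖ ≤ 1) (hc'1 : ‖c'‖ ≤ 1) :
    c * c' ∈ I ∧ 0 ≤ c * c' := by
  rcases subsingleton_or_nontrivial A with hA | hA
  · have h1 : c * c' = (0:ℝ) • (1:A) := Subsingleton.elim _ _
    exact ⟨h1 ▸ hI.const_mem 0, le_of_eq (Subsingleton.elim _ _)⟩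
  have hcsa : IsSelfAdjoint c := .of_nonneg hc0
  have hc'sa : IsSelfAdjoint c' := .of_nonneg hc'0
  -- the commutative C⋆-subalgebra generated by c and c'
  set S : StarSubalgebra ℂ A := (StarAlgebra.adjoin ℂ ({c, c'} : Set A)).topologicalClosure
    with hSdef
  haveI hSclosed : IsClosed (S : Set A) := StarSubalgebra.isClosed_topologicalClosure _
  have hcc : ∀ a ∈ ({c, c'} : Set A), ∀ b ∈ ({c, c'} : Set A), a * b = b * a := by
    intro a ha b hb
    simp only [Set.mem_insert_iff, Set.mem_singleton_iff] at ha hb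
    rcases ha with rfl | rfl <;> rcases hb with rfl | rfl <;>
      first | rfl | rw [hcomm] | rw [← hcomm]
  have hcc_star : ∀ a ∈ ({c, c'} : Set A), ∀ b ∈ ({c, c'} : Set A),
      a * star b = star b * a := by
    intro a ha b hb
    have hb' : star b = b := by
      simp only [Set.mem_insert_iff, Set.mem_singleton_iff] at hb
      rcases hb with rfl | rfl
      · exact hcsa.star_eq
      · exact hc'sa.star_eq
    rw [hb']
    exact hcc a ha b hb
  have hScomm : ∀ x y : ↥S, x * y = y * x := by
    letI : CommRing ↥(StarAlgebra.adjoin ℂ ({c, c'} : Set A)) :=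
      StarAlgebra.adjoinCommRingOfComm ℂ hcc hcc_star
    letI : CommRing ↥S :=
      StarSubalgebra.commRingTopologicalClosure _ (fun x y => mul_comm x y)
    exact fun x y => mul_comm x y
  letI : CommCStarAlgebra ↥S := { (inferInstance : CStarAlgebra ↥S) with mul_comm := hScomm }
  haveI : Nontrivial ↥S :=
    ⟨⟨1, 0, fun h => one_ne_zero (by simpa using congrArg Subtype.val h : (1:A) = 0)⟩⟩
  have hcS : c ∈ S := StarSubalgebra.le_topologicalClosure _
    (StarAlgebra.subset_adjoin ℂ _ (by simp))
  have hc'S : c' ∈ S := StarSubalgebra.le_topologicalClosure _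
    (StarAlgebra.subset_adjoin ℂ _ (by simp))
  set cS : ↥S := ⟨c, hcS⟩ with hcSdef
  set c'S : ↥S := ⟨c', hc'S⟩ with hc'Sdef
  have hcsaS : IsSelfAdjoint cS :=
    Subtype.ext (by rw [StarMemClass.coe_star]; exact hcsa.star_eq)
  have hc'saS : IsSelfAdjoint c'S :=
    Subtype.ext (by rw [StarMemClass.coe_star]; exact hc'sa.star_eq)
  have hnorm_cS : ‖cS‖ = ‖c‖ := rfl
  have hnorm_c'S : ‖c'S‖ = ‖c'‖ := rfl
  -- spectra: nonneg
  have hspec : ∀ (x : ↥S), 0 ≤ (x : A) → spectrum ℝ x ⊆ Set.Ici 0 := by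
    intro x hx r hr
    have h1 : (r:ℂ) ∈ spectrum ℂ x := by
      rw [← Complex.coe_algebraMap]
      exact spectrum.algebraMap_mem ℂ hr
    rw [StarSubalgebra.spectrum_eq S] at h1
    have h2 : r ∈ spectrum ℝ (x : A) := by
      rw [← Complex.coe_algebraMap] at h1
      exact (spectrum.algebraMap_mem_iff ℂ).mp h1
    have h3 := (StarOrderedRing.nonneg_iff_spectrum_nonneg (R := ℝ) (x : A)
      (IsSelfAdjoint.of_nonneg hx)).mp hx
    exact h3 r h2
  have hspec_c : spectrum ℝ cS ⊆ Set.Ici 0 := hspec cS hc0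
  have hspec_c' : spectrum ℝ c'S ⊆ Set.Ici 0 := hspec c'S hc'0
  -- the approximants inside S
  set Sn : ℕ → ↥S := fun n => ∑ k ∈ Finset.range n, (n:ℝ)⁻¹ •
      wedgeC cS ((n:ℝ)^2 • (veeC c'S (((k:ℝ)/n) • 1) - ((k:ℝ)/n) • 1)) with hSndef
  have hest : ∀ n : ℕ, 1 ≤ n → ‖Sn n - cS * c'S‖ ≤ (n:ℝ)⁻¹ := fun n hn =>
    key_estimate hcsaS hc'saS hspec_c hspec_c' (hnorm_cS ▸ hc1) (hnorm_c'S ▸ hc'1) n hn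
  -- the corresponding elements of A, written with isocone operations
  set T : ℕ → A := fun n => ∑ k ∈ Finset.range n, (n:ℝ)⁻¹ •
      cstarWedge c ((n:ℝ)^2 • (cstarVee c' (((k:ℝ)/n) • 1) + (-((k:ℝ)/n)) • 1)) with hTdef
  have hTmem : ∀ n : ℕ, T n ∈ I := by
    intro n
    rw [hTdef]
    refine Finset.sum_induction _ (· ∈ I) (fun a b ha hb => hI.add_mem a ha b hb)
      (by simpa using hI.const_mem 0) (fun k _ => ?_)
    refine hI.smul_mem _ (by positivity) _ ?_
    refine hI.wedge_mem c hc _ ?_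
    refine hI.smul_mem _ (by positivity) _ ?_
    exact hI.add_mem _ (hI.vee_mem c' hc' _ (hI.const_mem _)) _ (hI.const_mem _)
  -- the inclusion is a star algebra homomorphism
  have hιcont : Continuous (S.subtype) := continuous_subtype_val
  have hcoe : ∀ n : ℕ, ((Sn n : A)) = T n := by
    intro n
    rw [hSndef, hTdef]
    have : ((∑ k ∈ Finset.range n, (n:ℝ)⁻¹ •
        wedgeC cS ((n:ℝ)^2 • (veeC c'S (((k:ℝ)/n) • 1) - ((k:ℝ)/n) • 1)) : ↥S) : A)
        = S.subtype (∑ k ∈ Finset.range n, (n:ℝ)⁻¹ •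
        wedgeC cS ((n:ℝ)^2 • (veeC c'S (((k:ℝ)/n) • 1) - ((k:ℝ)/n) • 1))) := rfl
    rw [this, map_sum]
    refine Finset.sum_congr rfl fun k _ => ?_
    set t : ℝ := (k:ℝ)/n with ht
    have h1S : IsSelfAdjoint (t • (1:↥S)) :=
      IsSelfAdjoint.smul (star_trivial t) (IsSelfAdjoint.one ↥S)
    have hveeS : IsSelfAdjoint (veeC c'S (t • (1:↥S))) := isSelfAdjoint_veeC hc'saS h1S
    have hwS : IsSelfAdjoint ((n:ℝ)^2 • (veeC c'S (t • (1:↥S)) - t • (1:↥S))) :=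
      IsSelfAdjoint.smul (star_trivial _) (hveeS.sub h1S)
    rw [map_real_smul S.subtype, map_wedgeC S.subtype hιcont hcsaS hwS,
      map_real_smul S.subtype, map_sub, map_veeC S.subtype hιcont hc'saS h1S,
      map_real_smul S.subtype, map_one]
    have hsub : S.subtype cS = c := rfl
    have hsub' : S.subtype c'S = c' := rfl
    rw [hsub, hsub']
    have h1A : IsSelfAdjoint (t • (1:A)) :=
      IsSelfAdjoint.smul (star_trivial t) (IsSelfAdjoint.one A)
    have hveeA : IsSelfAdjoint (veeC c' (t • (1:A))) := isSelfAdjoint_veeC hc'sa h1A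
    have hwA : IsSelfAdjoint ((n:ℝ)^2 • (veeC c' (t • (1:A)) - t • (1:A))) :=
      IsSelfAdjoint.smul (star_trivial _) (hveeA.sub h1A)
    rw [cstarVee_eq_veeC hc'sa h1A, neg_smul, ← sub_eq_add_neg,
      cstarWedge_eq_wedgeC hcsa hwA]
  -- convergence
  have hTlim : Filter.Tendsto T Filter.atTop (nhds (c * c')) := by
    have hmul : ((cS * c'S : ↥S) : A) = c * c' := rfl
    rw [← tendsto_sub_nhds_zero_iff]
    refine squeeze_zero_norm' ?_ tendsto_inv_atTop_nhds_zero_nat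
    refine Filter.eventually_atTop.mpr ⟨1, fun n hn => ?_⟩
    have : T n - c * c' = ((Sn n - cS * c'S : ↥S) : A) := by
      push_cast [hcoe n, hmul]
      ring
    rw [this]
    exact hest n hn
  constructor
  · exact hI.closed.mem_of_tendsto hTlim (Filter.Eventually.of_forall hTmem)
  · -- positivity via characters
    have hsa : IsSelfAdjoint (c * c') := by
      rw [IsSelfAdjoint, star_mul, hcsa.star_eq, hc'sa.star_eq, ← hcomm]
    rw [StarOrderedRing.nonneg_iff_spectrum_nonneg (R := ℝ) (c * c') hsa]
    intro r hr
    have h1 : (r:ℂ) ∈ spectrum ℂ (cS * c'S) := by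
      rw [StarSubalgebra.spectrum_eq S]
      rw [← Complex.coe_algebraMap]
      exact spectrum.algebraMap_mem ℂ hr
    obtain ⟨φ, hφ⟩ := CharacterSpace.mem_spectrum_iff_exists.mp h1
    have hφm : φ (cS * c'S) = φ cS * φ c'S := map_mul φ _ _
    obtain ⟨h1', -⟩ := char_re_props φ hcsaS hspec_c (hnorm_cS ▸ hc1)
    obtain ⟨h2', -⟩ := char_re_props φ hc'saS hspec_c' (hnorm_c'S ▸ hc'1)
    have hφc : φ cS = (((φ cS).re : ℝ) : ℂ) := char_apply_eq_re φ hcsaS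
    have hφc' : φ c'S = (((φ c'S).re : ℝ) : ℂ) := char_apply_eq_re φ hc'saS
    have : (r : ℂ) = (((φ cS).re * (φ c'S).re : ℝ) : ℂ) := by
      rw [← hφ, hφm, hφc, hφc']
      simp
    have hrr : r = (φ cS).re * (φ c'S).re := by exact_mod_cast this
    rw [hrr]
    exact mul_nonneg h1' h2'


end Stmt15Aux

/-- Let `(I, C)` be an `I*`-algebra and `c, c' ∈ I₊ = I ∩ C₊` with `[c, c'] = 0`.
Then `c·c' ∈ I₊`. -/
theorem stmt_15 {A : Type*} [CStarAlgebra A] [PartialOrder A] [StarOrderedRing A]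
    {I : Set A} (hI : IsIsocone A I) (c c' : A)
    (hc : c ∈ I) (hc0 : 0 ≤ c) (hc' : c' ∈ I) (hc'0 : 0 ≤ c')
    (hcomm : c * c' = c' * c) :
    c * c' ∈ I ∧ 0 ≤ c * c' := by
  set r : ℝ := (1 + ‖c‖)⁻¹ with hr
  set s : ℝ := (1 + ‖c'‖)⁻¹ with hs
  have hc_norm := norm_nonneg c
  have hc'_norm := norm_nonneg c'
  have hr0 : 0 < r := by rw [hr]; positivity
  have hs0 : 0 < s := by rw [hs]; positivity
  have hrc1 : ‖r • c‖ ≤ 1 := by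
    rw [norm_smul, Real.norm_eq_abs, abs_of_pos hr0, hr]
    rw [inv_mul_le_iff₀ (by positivity)]
    linarith
  have hsc1 : ‖s • c'‖ ≤ 1 := by
    rw [norm_smul, Real.norm_eq_abs, abs_of_pos hs0, hs]
    rw [inv_mul_le_iff₀ (by positivity)]
    linarith
  have hcomm' : (r • c) * (s • c') = (s • c') * (r • c) := by
    rw [smul_mul_assoc, mul_smul_comm, smul_mul_assoc, mul_smul_comm, hcomm, smul_comm]
  obtain ⟨hmem, hpos⟩ := Stmt15Aux.key hI (hI.smul_mem r hr0.le c hc) (smul_nonneg hr0.le hc0)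
    (hI.smul_mem s hs0.le c' hc') (smul_nonneg hs0.le hc'0) hcomm' hrc1 hsc1
  have hprod : (r • c) * (s • c') = (r * s) • (c * c') := by
    rw [smul_mul_assoc, mul_smul_comm, smul_smul]
  have hrs : r * s ≠ 0 := by positivity
  have hcc : c * c' = (r * s)⁻¹ • ((r • c) * (s • c')) := by
    rw [hprod, smul_smul, inv_mul_cancel₀ hrs, one_smul]
  constructor
  · rw [hcc]
    exact hI.smul_mem _ (by positivity) _ hmem
  · rw [hcc]
    exact smul_nonneg (by positivity) hpos

end
end

section
/- Let M be a compact toposet such that for all f, g in I₊(M), ‖f+g‖ = ‖f‖ + ‖g‖. Then M has a greatest element. -/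
/-- Let `M` be a (nonempty) compact toposet such that `‖f+g‖ = ‖f‖ + ‖g‖` for all
nonnegative continuous isotone `f, g`.  Then `M` has a greatest element. -/
theorem stmt_17 {M : Type*} [TopologicalSpace M] [CompactSpace M] [Nonempty M]
    [PartialOrder M]
    (htoposet : ∀ x y : M, x ≤ y ↔ ∀ f : C(M, ℝ), Monotone f → f x ≤ f y)
    (hnorm : ∀ f g : C(M, ℝ), Monotone f → Monotone g →
      (∀ x, 0 ≤ f x) → (∀ x, 0 ≤ g x) → ‖f + g‖ = ‖f‖ + ‖g‖) :
    ∃ b : M, ∀ x : M, x ≤ b := by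
  classical
  set ι := {f : C(M, ℝ) // Monotone f ∧ ∀ x, 0 ≤ f x} with hι
  haveI : Nonempty ι := ⟨⟨0, fun _ _ _ => le_rfl, fun x => le_rfl⟩⟩
  let S : ι → Set M := fun f => {x | (f : C(M, ℝ)) x = ‖(f : C(M, ℝ))‖}
  -- each f attains its norm
  have hle : ∀ (f : ι) (x : M), (f : C(M, ℝ)) x ≤ ‖(f : C(M, ℝ))‖ := by
    intro f x
    calc (f : C(M, ℝ)) x ≤ |(f : C(M, ℝ)) x| := le_abs_self _
    _ ≤ ‖(f : C(M, ℝ))‖ := (f : C(M, ℝ)).norm_coe_le_norm x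
  have hattain : ∀ f : ι, ∃ x : M, (f : C(M, ℝ)) x = ‖(f : C(M, ℝ))‖ := by
    intro f
    obtain ⟨x0, -, hx0⟩ := isCompact_univ.exists_isMaxOn Set.univ_nonempty
      (f.1.continuous.continuousOn)
    refine ⟨x0, le_antisymm (hle f x0) ?_⟩
    have : ‖(f : C(M, ℝ))‖ ≤ (f : C(M, ℝ)) x0 := by
      apply ContinuousMap.norm_le _ (f.2.2 x0) |>.2
      intro x
      rw [Real.norm_eq_abs, abs_of_nonneg (f.2.2 x)]
      exact hx0 (Set.mem_univ x)
    exact this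
  have hS_nonempty : ∀ f : ι, (S f).Nonempty := hattain
  have hS_closed : ∀ f : ι, IsClosed (S f) := fun f =>
    isClosed_eq f.1.continuous continuous_const
  have hsub : ∀ f g : ι, ∀ (hm : Monotone ((f : C(M, ℝ)) + (g : C(M, ℝ))))
      (hn : ∀ x, 0 ≤ ((f : C(M, ℝ)) + (g : C(M, ℝ))) x),
      S ⟨(f : C(M, ℝ)) + g, hm, hn⟩ ⊆ S f ∩ S g := by
    intro f g hm hn x hx
    have hsum : (f : C(M, ℝ)) x + (g : C(M, ℝ)) x = ‖(f : C(M, ℝ))‖ + ‖(g : C(M, ℝ))‖ := by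
      simp only [S, Set.mem_setOf_eq, ContinuousMap.add_apply] at hx
      rw [hnorm f g f.2.1 g.2.1 f.2.2 g.2.2] at hx
      exact hx
    have h1 := hle f x
    have h2 := hle g x
    constructor <;> simp only [S, Set.mem_setOf_eq] <;> linarith
  have hdir : Directed (· ⊇ ·) S := by
    intro f g
    have hm : Monotone ((f : C(M, ℝ)) + (g : C(M, ℝ))) := fun a b hab => by
      simpa using add_le_add (f.2.1 hab) (g.2.1 hab)
    have hn : ∀ x, 0 ≤ ((f : C(M, ℝ)) + (g : C(M, ℝ))) x := fun x => by
      simpa using add_nonneg (f.2.2 x) (g.2.2 x)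
    exact ⟨⟨(f : C(M, ℝ)) + g, hm, hn⟩,
      fun x hx => (hsub f g hm hn hx).1, fun x hx => (hsub f g hm hn hx).2⟩
  obtain ⟨b, hb⟩ := IsCompact.nonempty_iInter_of_directed_nonempty_isCompact_isClosed S
    hdir hS_nonempty (fun f => (hS_closed f).isCompact) hS_closed
  simp only [Set.mem_iInter] at hb
  refine ⟨b, fun x => ?_⟩
  rw [htoposet]
  intro f hf
  set g : C(M, ℝ) := f + ContinuousMap.const M ‖f‖ with hg
  have hgm : Monotone g := fun a c hac => by
    simp only [hg, ContinuousMap.add_apply, ContinuousMap.const_apply]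
    exact add_le_add_left (hf hac) _
  have hgn : ∀ y, 0 ≤ g y := fun y => by
    simp only [hg, ContinuousMap.add_apply, ContinuousMap.const_apply]
    have : -(‖f‖) ≤ f y := neg_le_of_abs_le (f.norm_coe_le_norm y)
    linarith
  have hgb := hb ⟨g, hgm, hgn⟩
  have : g x ≤ g b := by
    rw [Set.mem_setOf_eq] at hgb
    calc g x ≤ ‖g‖ := hle ⟨g, hgm, hgn⟩ x
    _ = g b := hgb.symm
  simpa [hg] using this
end

section
/- For any hermitian 2×2 complex matrices a and b, there exist α ∈ [0,1] and β ≥ 0 such that a ∨ b = αa + (1−α)b + β·I₂ and a ∧ b = (1−α)a + αb − β·I₂, where a ∨ b = (a+b)/2 + |a−b|/2 and a ∧ b = (a+b)/2 − |a−b|/2. -/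
open scoped ComplexOrder

open Matrix in
private lemma conj_diag_sq (U : Matrix (Fin 2) (Fin 2) ℂ) (hU' : star U * U = 1)
    (f : Fin 2 → ℂ) :
    (U * diagonal f * star U) ^ 2 = U * diagonal (fun i => f i * f i) * star U := by
  have h : (U * diagonal f * star U) * (U * diagonal f * star U)
      = U * (diagonal f * (star U * U) * diagonal f) * star U := by
    noncomm_ring
  rw [sq, h, hU', mul_one, diagonal_mul_diagonal]

/-- For hermitian 2×2 complex matrices `a` and `b`, there exist `α ∈ [0,1]` and `β ≥ 0`
with `a ∨ b = α·a + (1−α)·b + β·1` and `a ∧ b = (1−α)·a + α·b − β·1`, where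
`a ∨ b = (a+b)/2 + |a−b|/2`, `a ∧ b = (a+b)/2 − |a−b|/2` and `|a−b|` is the (unique)
positive semidefinite square root `p` of `(a−b)²`. -/
theorem stmt_19 (a b : Matrix (Fin 2) (Fin 2) ℂ)
    (ha : IsSelfAdjoint a) (hb : IsSelfAdjoint b)
    (p : Matrix (Fin 2) (Fin 2) ℂ) (hp : p.PosSemidef) (hpsq : p * p = (a - b) * (a - b)) :
    ∃ α β : ℝ, 0 ≤ α ∧ α ≤ 1 ∧ 0 ≤ β ∧
      (2 : ℝ)⁻¹ • (a + b + p) = α • a + (1 - α) • b + β • (1 : Matrix (Fin 2) (Fin 2) ℂ) ∧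
      (2 : ℝ)⁻¹ • (a + b - p) = (1 - α) • a + α • b - β • (1 : Matrix (Fin 2) (Fin 2) ℂ) := by
  classical
  set d : Matrix (Fin 2) (Fin 2) ℂ := a - b with hd_def
  have hd : d.IsHermitian := (ha.sub hb)
  set e : Fin 2 → ℝ := hd.eigenvalues with he_def
  obtain ⟨s, t, hs_abs, ht_nonneg, hkey⟩ :
      ∃ s t : ℝ, |s| ≤ 1 ∧ 0 ≤ t ∧ ∀ i, s * e i + t = |e i| := by
    by_cases h : e 0 = e 1
    · refine ⟨1, |e 0| - e 0, by simp, by linarith [le_abs_self (e 0)], ?_⟩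
      intro i
      fin_cases i <;> simp only [Fin.zero_eta, Fin.mk_one]
      · ring
      · rw [← h]; ring
    · have hne : e 0 - e 1 ≠ 0 := sub_ne_zero.mpr h
      set s : ℝ := (|e 0| - |e 1|) / (e 0 - e 1) with hs_def
      have hs_abs : |s| ≤ 1 := by
        rw [hs_def, abs_div]
        exact div_le_one_of_le₀ (abs_abs_sub_abs_le_abs_sub _ _) (abs_nonneg _)
      have hse : |s * e 0| ≤ |e 0| := by
        rw [abs_mul]
        calc |s| * |e 0| ≤ 1 * |e 0| := mul_le_mul_of_nonneg_right hs_abs (abs_nonneg _)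
          _ = |e 0| := one_mul _
      refine ⟨s, |e 0| - s * e 0, hs_abs, by linarith [le_abs_self (s * e 0)], ?_⟩
      intro i
      fin_cases i <;> simp only [Fin.zero_eta, Fin.mk_one]
      · ring
      · rw [hs_def]
        field_simp
        ring
  obtain ⟨U, hUu, hspec⟩ : ∃ U ∈ Matrix.unitaryGroup (Fin 2) ℂ,
      d = U * Matrix.diagonal (RCLike.ofReal ∘ e) * star U :=
    ⟨hd.eigenvectorUnitary, (hd.eigenvectorUnitary).2, hd.spectral_theorem⟩
  have hU1 : U * star U = 1 := (Matrix.mem_unitaryGroup_iff).mp hUu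
  have hU2 : star U * U = 1 := (Matrix.mem_unitaryGroup_iff').mp hUu
  set q : Matrix (Fin 2) (Fin 2) ℂ := s • d + t • (1 : Matrix (Fin 2) (Fin 2) ℂ) with hq_def
  have h2 : ∀ (c : ℝ) (f : Fin 2 → ℂ),
      c • (U * Matrix.diagonal f * star U) = U * Matrix.diagonal (fun i => c • f i) * star U := by
    intro c f
    rw [← smul_mul_assoc, ← mul_smul_comm]
    congr 2
    ext i j
    by_cases hij : i = j <;> simp [Matrix.diagonal, hij]
  have hq_eq : q = U * Matrix.diagonal (fun i => ((|e i| : ℝ) : ℂ)) * star U := by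
    rw [hq_def, hspec]
    have h1 : (1 : Matrix (Fin 2) (Fin 2) ℂ)
        = U * Matrix.diagonal (fun _ => (1 : ℂ)) * star U := by
      simp [hU1]
    rw [h1, h2, h2, ← Matrix.add_mul, ← Matrix.mul_add]
    have hDsum : (Matrix.diagonal fun i => s • (RCLike.ofReal ∘ e) i)
        + (Matrix.diagonal fun i => t • (1 : ℂ))
        = Matrix.diagonal fun i => (((|e i| : ℝ)) : ℂ) := by
      ext i j
      by_cases hij : i = j
      · subst hij
        simp only [Matrix.diagonal_apply_eq, Matrix.add_apply, Function.comp_apply]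
        rw [← hkey i]
        simp only [Complex.real_smul, smul_eq_mul]
        push_cast
        ring_nf
        rfl
      · simp [Matrix.diagonal_apply_ne _ hij, hij]
    rw [hDsum]
  have hq_psd : q.PosSemidef := by
    rw [hq_eq]
    exact (Matrix.posSemidef_diagonal_iff.mpr fun i => by positivity).mul_mul_conjTranspose_same U
  have hq_sq : q ^ 2 = d ^ 2 := by
    rw [hq_eq, conj_diag_sq U hU2]
    conv_rhs => rw [hspec, conj_diag_sq U hU2]
    congr 2
    rw [show (fun i => (((|e i| : ℝ)) : ℂ) * (((|e i| : ℝ)) : ℂ))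
        = fun i => (RCLike.ofReal ∘ e) i * (RCLike.ofReal ∘ e) i from ?_]
    funext i
    simp only [Function.comp_apply]
    norm_cast
    rw [abs_mul_abs_self]
    rfl
  have hpq : p = q := by
    open scoped MatrixOrder in
    refine (CFC.sq_eq_sq_iff p q hp.nonneg hq_psd.nonneg).mp ?_
    rw [hq_sq, sq, sq, hpsq]
  refine ⟨(1 + s) / 2, t / 2, by linarith [neg_abs_le s], by linarith [le_abs_self s],
    by linarith, ?_, ?_⟩
  · rw [hpq, hq_def, hd_def]
    ext i j
    simp only [Matrix.add_apply, Matrix.smul_apply, Matrix.sub_apply, Matrix.one_apply,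
      smul_eq_mul, Complex.real_smul]
    push_cast
    ring
  · rw [hpq, hq_def, hd_def]
    ext i j
    simp only [Matrix.add_apply, Matrix.smul_apply, Matrix.sub_apply, Matrix.one_apply,
      smul_eq_mul, Complex.real_smul]
    push_cast
    ring
end
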